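/- arXiv:1104.5698 — 2 statements merged into one kernel-verified Lean document; each statement's English description precedes it below -/
import Mathlib

section
/- Fix a natural number g. For every partition λ, in ℚ(t,u,v) one has ℋ'_λ(tuv, u^{−1}, v^{−1}) = t^{(2−2g)n(λ)} · ∏_{x∈d(λ)} Z(t^{h(x)} (uv)^{a(x)}), where the left-hand side is obtained from ℋ'_λ(t,u,v) by the substitution t ↦ tuv, u ↦ u^{−1}, v ↦ v^{−1}, and Z(s) = (1−su)^g(1−sv)^g/((1−suv)(1−s)). -/
/-- The arm length `a(x) = λ_i − j` of a box of a Young diagram (0-indexed cells). -/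
def YoungDiagram.armLen (μ : YoungDiagram) (c : ℕ × ℕ) : ℕ :=
  μ.rowLen c.1 - (c.2 + 1)

/-- The leg length `l(x) = λ'_j − i` of a box of a Young diagram (0-indexed cells). -/
def YoungDiagram.legLen (μ : YoungDiagram) (c : ℕ × ℕ) : ℕ :=
  μ.colLen c.2 - (c.1 + 1)

/-- The hook length `h(x) = a(x) + l(x) + 1` of a box of a Young diagram. -/
def YoungDiagram.hookLen (μ : YoungDiagram) (c : ℕ × ℕ) : ℕ :=
  μ.armLen c + μ.legLen c + 1

/-- `n(λ) = Σ_{i≥1} (i−1)·λ_i` for the partition `λ` encoded by a Young diagram. -/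
def YoungDiagram.nInv (μ : YoungDiagram) : ℕ :=
  ∑ i ∈ Finset.range (μ.colLen 0), i * μ.rowLen i

/-- The rational function field `ℚ(t,u,v)`. -/
noncomputable abbrev K3 : Type := FractionRing (MvPolynomial (Fin 3) ℚ)

/-- The variable `t` of `ℚ(t,u,v)`. -/
noncomputable def tK : K3 := algebraMap (MvPolynomial (Fin 3) ℚ) K3 (MvPolynomial.X 0)

/-- The variable `u` of `ℚ(t,u,v)`. -/
noncomputable def uK : K3 := algebraMap (MvPolynomial (Fin 3) ℚ) K3 (MvPolynomial.X 1)

/-- The variable `v` of `ℚ(t,u,v)`. -/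
noncomputable def vK : K3 := algebraMap (MvPolynomial (Fin 3) ℚ) K3 (MvPolynomial.X 2)

/-- `Z(s) = (1−su)^g (1−sv)^g / ((1−suv)(1−s))`, as a function of `s ∈ ℚ(t,u,v)`. -/
noncomputable def Zg (g : ℕ) (s : K3) : K3 :=
  (1 - s * uK) ^ g * (1 - s * vK) ^ g / ((1 - s * uK * vK) * (1 - s))

/-- `ℋ'_λ(t,u,v) = (tuv)^{(2−2g)n(λ)} ∏_{x∈d(λ)}
  (1−t^h v^l u^{l+1})^g (1−t^h u^l v^{l+1})^g / ((1−t^h(uv)^{l+1})(1−t^h(uv)^l))`,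
as a function of the arguments `t, u, v`, so that substitutions may be performed. -/
noncomputable def Hprime (g : ℕ) (μ : YoungDiagram) (t u v : K3) : K3 :=
  (t * u * v) ^ (((2 : ℤ) - 2 * g) * (μ.nInv : ℤ)) *
    ∏ x ∈ μ.cells,
      ((1 - t ^ μ.hookLen x * v ^ μ.legLen x * u ^ (μ.legLen x + 1)) ^ g
        * (1 - t ^ μ.hookLen x * u ^ μ.legLen x * v ^ (μ.legLen x + 1)) ^ g
        / ((1 - t ^ μ.hookLen x * (u * v) ^ (μ.legLen x + 1))
            * (1 - t ^ μ.hookLen x * (u * v) ^ μ.legLen x)))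

lemma uK_ne_zero : uK ≠ 0 := by
  simp [uK, IsFractionRing.to_map_eq_zero_iff, MvPolynomial.X_ne_zero]

lemma vK_ne_zero : vK ≠ 0 := by
  simp [vK, IsFractionRing.to_map_eq_zero_iff, MvPolynomial.X_ne_zero]

lemma cell_eq (g a l : ℕ) :
    (1 - (tK * uK * vK) ^ (a + l + 1) * vK⁻¹ ^ l * uK⁻¹ ^ (l + 1)) ^ g
      * (1 - (tK * uK * vK) ^ (a + l + 1) * uK⁻¹ ^ l * vK⁻¹ ^ (l + 1)) ^ g
      / ((1 - (tK * uK * vK) ^ (a + l + 1) * (uK⁻¹ * vK⁻¹) ^ (l + 1))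
          * (1 - (tK * uK * vK) ^ (a + l + 1) * (uK⁻¹ * vK⁻¹) ^ l))
      = Zg g (tK ^ (a + l + 1) * (uK * vK) ^ a) := by
  have hu := uK_ne_zero
  have hv := vK_ne_zero
  have h1 : (tK * uK * vK) ^ (a + l + 1) * vK⁻¹ ^ l * uK⁻¹ ^ (l + 1)
      = tK ^ (a + l + 1) * (uK * vK) ^ a * vK := by
    simp only [inv_pow]
    field_simp
    ring
  have h2 : (tK * uK * vK) ^ (a + l + 1) * uK⁻¹ ^ l * vK⁻¹ ^ (l + 1)
      = tK ^ (a + l + 1) * (uK * vK) ^ a * uK := by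
    simp only [inv_pow]
    field_simp
    ring
  have h3 : (tK * uK * vK) ^ (a + l + 1) * (uK⁻¹ * vK⁻¹) ^ (l + 1)
      = tK ^ (a + l + 1) * (uK * vK) ^ a := by
    simp only [inv_pow, mul_pow]
    field_simp
    ring
  have h4 : (tK * uK * vK) ^ (a + l + 1) * (uK⁻¹ * vK⁻¹) ^ l
      = tK ^ (a + l + 1) * (uK * vK) ^ a * (uK * vK) := by
    simp only [inv_pow, mul_pow]
    field_simp
    ring
  rw [h1, h2, h3, h4, Zg]
  ring

/-- Fix `g : ℕ`. For every partition `λ`, in `ℚ(t,u,v)` one has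
`ℋ'_λ(tuv, u^{−1}, v^{−1}) = t^{(2−2g)n(λ)} · ∏_{x∈d(λ)} Z(t^{h(x)} (uv)^{a(x)})`,
where the left-hand side is obtained from `ℋ'_λ(t,u,v)` by the substitution
`t ↦ tuv`, `u ↦ u⁻¹`, `v ↦ v⁻¹`, and `Z(s) = (1−su)^g(1−sv)^g/((1−suv)(1−s))`. -/
theorem Hprime_substituted_eq_prod_zeta_arm (g : ℕ) (μ : YoungDiagram) :
    Hprime g μ (tK * uK * vK) uK⁻¹ vK⁻¹
      = tK ^ (((2 : ℤ) - 2 * g) * (μ.nInv : ℤ)) *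
          ∏ x ∈ μ.cells, Zg g (tK ^ μ.hookLen x * (uK * vK) ^ μ.armLen x) := by
  have hu := uK_ne_zero
  have hv := vK_ne_zero
  rw [Hprime]
  have hpre : tK * uK * vK * uK⁻¹ * vK⁻¹ = tK := by field_simp
  rw [hpre]
  congr 1
  refine Finset.prod_congr rfl fun x hx => ?_
  show (1 - (tK * uK * vK) ^ (μ.armLen x + μ.legLen x + 1) * vK⁻¹ ^ μ.legLen x
        * uK⁻¹ ^ (μ.legLen x + 1)) ^ g
      * (1 - (tK * uK * vK) ^ (μ.armLen x + μ.legLen x + 1) * uK⁻¹ ^ μ.legLen x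
        * vK⁻¹ ^ (μ.legLen x + 1)) ^ g
      / ((1 - (tK * uK * vK) ^ (μ.armLen x + μ.legLen x + 1) * (uK⁻¹ * vK⁻¹) ^ (μ.legLen x + 1))
          * (1 - (tK * uK * vK) ^ (μ.armLen x + μ.legLen x + 1) * (uK⁻¹ * vK⁻¹) ^ μ.legLen x))
      = Zg g (tK ^ (μ.armLen x + μ.legLen x + 1) * (uK * vK) ^ μ.armLen x)
  exact cell_eq g (μ.armLen x) (μ.legLen x)
end

section
/- For m ∈ ℤ define F_m = (ys)^m/(1−ys) − (s/y)^m/(1−s/y) in the rational function field ℚ(y,s). Then: (i) the image of F_m in the Laurent series field ℚ(y)((s)) equals Σ_{k≥m} (y^k − y^{−k}) s^k; and (ii) F_m(s) = F_{1−m}(s^{−1}) in ℚ(y,s), where F_{1−m}(s^{−1}) denotes the image of F_{1−m} under the automorphism of ℚ(y,s) fixing y and sending s ↦ s^{−1}. (This is the content, per T-degree, of the Proposition that Ω'_{>μ} and Ω'_{≥μ} are T-rational and satisfy Ω'_{>μ}(s) = Ω'_{≥−μ}(s^{−1}): the coefficient of s^k T^r in Ω' is (y^k − y^{−k})Ω_r,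 the truncation k/r > μ corresponds to k ≥ m with m the least integer > μr, and the truncation k/r ≥ −μ corresponds to k ≥ 1−m.) -/
/-- The field of formal Laurent series `ℚ(y)((s))` over the rational function field
`ℚ(y)`. -/
noncomputable abbrev L : Type := LaurentSeries (RatFunc ℚ)

/-- The variable `s` of `ℚ(y)((s))`. -/
noncomputable def sL : L := HahnSeries.ofPowerSeries ℤ (RatFunc ℚ) PowerSeries.X

/-- The variable `y` of `ℚ(y)`, viewed as a constant of `ℚ(y)((s))`. -/
noncomputable def yL : L := HahnSeries.C (RatFunc.X : RatFunc ℚ)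

/-- `F_m = (ys)^m/(1−ys) − (s/y)^m/(1−s/y)`, computed in `ℚ(y)((s))` (the image of the
corresponding element of `ℚ(y,s)` under the Laurent-expansion embedding at `s = 0`). -/
noncomputable def FL (m : ℤ) : L :=
  (yL * sL) ^ m / (1 - yL * sL) - (sL / yL) ^ m / (1 - sL / yL)

/-- The rational function field `ℚ(y,s)` (for part (ii)). -/
noncomputable abbrev K2 : Type := FractionRing (MvPolynomial (Fin 2) ℚ)

/-- The variable `y` of `ℚ(y,s)`. -/
noncomputable def yK : K2 := algebraMap (MvPolynomial (Fin 2) ℚ) K2 (MvPolynomial.X 0)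

/-- The variable `s` of `ℚ(y,s)`. -/
noncomputable def sK : K2 := algebraMap (MvPolynomial (Fin 2) ℚ) K2 (MvPolynomial.X 1)

/-- `F_m = (ys)^m/(1−ys) − (s/y)^m/(1−s/y)` as an element of `ℚ(y,s)`. -/
noncomputable def FK (m : ℤ) : K2 :=
  (yK * sK) ^ m / (1 - yK * sK) - (sK / yK) ^ m / (1 - sK / yK)

/-! ### Auxiliary lemmas -/

/-- Geometric-type Laurent series: coefficient `c^k` for `k ≥ m`, `0` otherwise. -/
noncomputable def G (c : RatFunc ℚ) (m : ℤ) : L :=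
  { coeff := fun k => if m ≤ k then c ^ k else 0
    isPWO_support' := by
      have hbdd : BddBelow {k : ℤ | m ≤ k} := ⟨m, fun k hk => hk⟩
      apply Set.IsWF.isPWO
      apply hbdd.wellFoundedOn_lt.subset
      intro k hk
      simp only [Function.mem_support, ne_eq, ite_eq_right_iff, not_forall] at hk
      exact hk.1 }

lemma G_coeff (c : RatFunc ℚ) (m k : ℤ) :
    (G c m).coeff k = if m ≤ k then c ^ k else 0 := rfl

lemma single_inv' (a : ℤ) (r : RatFunc ℚ) (hr : r ≠ 0) :
    (HahnSeries.single a r : L)⁻¹ = HahnSeries.single (-a) r⁻¹ := by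
  refine (eq_inv_of_mul_eq_one_left ?_).symm
  rw [HahnSeries.single_mul_single, neg_add_cancel, inv_mul_cancel₀ hr]
  exact HahnSeries.single_zero_one

lemma single_zpow' (c : RatFunc ℚ) (hc : c ≠ 0) (m : ℤ) :
    (HahnSeries.single (1 : ℤ) c : L) ^ m = HahnSeries.single m (c ^ m) := by
  have hpow : ∀ n : ℕ, (HahnSeries.single (1 : ℤ) c : L) ^ n
      = HahnSeries.single (n : ℤ) (c ^ n) := by
    intro n
    rw [HahnSeries.single_pow]
    simp
  cases m with
  | ofNat n => simpa using hpow n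
  | negSucc n =>
    rw [zpow_negSucc, hpow, single_inv' _ _ (pow_ne_zero _ hc), zpow_negSucc]
    simp [Int.negSucc_eq]

lemma one_sub_single_ne_zero (c : RatFunc ℚ) :
    (1 : L) - HahnSeries.single (1 : ℤ) c ≠ 0 := by
  intro h
  have := congrArg (fun x : L => x.coeff 0) h
  simp [HahnSeries.coeff_single_of_ne (by norm_num : (0:ℤ) ≠ 1)] at this

lemma geom_div (c : RatFunc ℚ) (hc : c ≠ 0) (m : ℤ) :
    (HahnSeries.single (1 : ℤ) c : L) ^ m / (1 - HahnSeries.single (1 : ℤ) c) = G c m := by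
  rw [single_zpow' c hc, div_eq_iff (one_sub_single_ne_zero c), mul_comm, sub_mul, one_mul]
  ext k
  rw [HahnSeries.coeff_sub, G_coeff]
  rw [show k = (k - 1) + 1 by ring, HahnSeries.coeff_single_mul_add, G_coeff]
  rw [show (k - 1) + 1 = k by ring, HahnSeries.coeff_single]
  rcases lt_trichotomy k m with h | h | h
  · rw [if_neg (by omega), if_neg (by omega), if_neg (by omega)]
    ring
  · subst h
    rw [if_pos rfl, if_pos le_rfl, if_neg (by omega)]
    ring
  · rw [if_neg (by omega), if_pos (by omega), if_pos (by omega)]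
    rw [zpow_sub_one₀ hc]
    field_simp
    ring

lemma inv_term_eq {F : Type*} [Field F] (a : F) (ha : a ≠ 0) (ha1 : a ≠ 1) (m : ℤ) :
    (a⁻¹) ^ (1 - m) / (1 - a⁻¹) = -(a ^ m / (1 - a)) := by
  have h1 : (1 : F) - a ≠ 0 := sub_ne_zero.mpr (Ne.symm ha1)
  have h2 : a - 1 ≠ 0 := sub_ne_zero.mpr ha1
  have e1 : (a⁻¹) ^ (1 - m) = a ^ (m - 1) := by
    rw [inv_zpow, ← zpow_neg, neg_sub]
  have e2 : (1 : F) - a⁻¹ = (a - 1) * a⁻¹ := by field_simp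
  have e3 : a ^ (m - 1) * a = a ^ m := by
    rw [zpow_sub_one₀ ha, mul_assoc, inv_mul_cancel₀ ha, mul_one]
  rw [e1, e2, div_mul_eq_div_div, div_inv_eq_mul, div_mul_eq_mul_div, e3,
    ← neg_sub a 1, div_neg, neg_neg]

lemma yL_mul_sL : yL * sL = HahnSeries.single (1 : ℤ) (RatFunc.X : RatFunc ℚ) := by
  rw [yL, sL, HahnSeries.ofPowerSeries_X, HahnSeries.C_apply, HahnSeries.single_mul_single]
  rw [zero_add, mul_one]

lemma sL_div_yL : sL / yL = HahnSeries.single (1 : ℤ) ((RatFunc.X : RatFunc ℚ))⁻¹ := by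
  rw [sL, yL, HahnSeries.ofPowerSeries_X, HahnSeries.C_apply, div_eq_mul_inv,
    single_inv' _ _ RatFunc.X_ne_zero, HahnSeries.single_mul_single]
  rw [neg_zero, add_zero, one_mul]

lemma injK : Function.Injective (algebraMap (MvPolynomial (Fin 2) ℚ) K2) :=
  IsFractionRing.injective _ _

lemma yK_ne_zero : yK ≠ 0 := by
  rw [yK]
  simpa using fun h => MvPolynomial.X_ne_zero (0 : Fin 2) (injK (by simpa using h))

lemma sK_ne_zero : sK ≠ 0 := by
  rw [sK]
  simpa using fun h => MvPolynomial.X_ne_zero (1 : Fin 2) (injK (by simpa using h))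

lemma yK_mul_sK_ne_one : yK * sK ≠ 1 := by
  rw [yK, sK, ← map_mul, ← map_one (algebraMap (MvPolynomial (Fin 2) ℚ) K2)]
  intro h
  have h2 := injK h
  have := congrArg (MvPolynomial.eval (fun _ => (0 : ℚ))) h2
  simp at this

lemma sK_div_yK_ne_one : sK / yK ≠ 1 := by
  intro h
  have : sK = yK := by
    field_simp [yK_ne_zero] at h
    exact h
  rw [sK, yK] at this
  have := injK this
  exact (by norm_num : (1 : Fin 2) ≠ 0) (MvPolynomial.X_injective this)

/-- For `m ∈ ℤ` define `F_m = (ys)^m/(1−ys) − (s/y)^m/(1−s/y)` in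
`ℚ(y,s)`. Then:
(i) the image of `F_m` in the Laurent series field `ℚ(y)((s))` equals
`Σ_{k≥m} (y^k − y^{−k}) s^k` (stated coefficientwise: the coefficient of `s^k` is
`y^k − y^{−k}` for `k ≥ m` and `0` otherwise); and
(ii) `F_m(s) = F_{1−m}(s^{−1})` in `ℚ(y,s)`, where `F_{1−m}(s^{−1})` is the image of
`F_{1−m}` under the automorphism of `ℚ(y,s)` fixing `y` and sending `s ↦ s^{−1}`. -/
theorem F_coeff_and_functional_equation (m : ℤ) :
    (∀ k : ℤ, (FL m).coeff k
        = if m ≤ k then (RatFunc.X : RatFunc ℚ) ^ k - (RatFunc.X : RatFunc ℚ) ^ (-k)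
          else 0)
    ∧ (∀ σ : K2 ≃+* K2, σ yK = yK → σ sK = sK⁻¹ → FK m = σ (FK (1 - m))) := by
  constructor
  · intro k
    rw [FL, yL_mul_sL, sL_div_yL, geom_div _ RatFunc.X_ne_zero,
      geom_div _ (inv_ne_zero RatFunc.X_ne_zero), HahnSeries.coeff_sub, G_coeff, G_coeff]
    rcases le_or_gt m k with h | h
    · rw [if_pos h, if_pos h, if_pos h, inv_zpow, ← zpow_neg]
    · rw [if_neg (by omega), if_neg (by omega), if_neg (by omega), sub_zero]
  · intro σ hy hs
    have hyne := yK_ne_zero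
    have hsne := sK_ne_zero
    have h1 : σ (yK * sK) = (sK / yK)⁻¹ := by
      rw [map_mul, hy, hs, div_eq_mul_inv, mul_inv, inv_inv, mul_comm]
    have h2 : σ (sK / yK) = (yK * sK)⁻¹ := by
      rw [map_div₀, hy, hs, mul_inv, div_eq_mul_inv, mul_comm]
    have hb0 : sK / yK ≠ 0 := div_ne_zero hsne hyne
    have ha0 : yK * sK ≠ 0 := mul_ne_zero hyne hsne
    rw [FK, FK, map_sub, map_div₀, map_div₀, map_zpow₀, map_zpow₀, map_sub, map_sub, map_one, h1, h2, inv_term_eq _ hb0 sK_div_yK_ne_one,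
      inv_term_eq _ ha0 yK_mul_sK_ne_one]
    ring
end
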